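/- Let P ∈ R be irreducible and suppose D(P) = F·P for some F ∈ R. Then F ≠ 0 and there exist complex numbers λ₀, λ₁, λ₂, λ₃ such that F = λ₀Y₀ + λ₁Y₁ + λ₂Y₂ + λ₃. -/

import Mathlib

/-!
The Darboux cofactor `F` of `D P = F P` is controlled by degrees: `D` raises the total degree by
at most one and does not raise the degree in `T` or in `Q`, while these degrees add under
multiplication; so `F` has total degree at most one and involves neither `T` nor `Q`.

`F ≠ 0` means that `D` has no nonconstant polynomial first integral. The top `Y`-homogeneous
component `H` of a first integral is killed by `E = ∑ (Yᵢ² - L) ∂_{Yᵢ}`. If `H` had degree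
`d > 0`, then, as `L` only involves the differences `Yᵢ - Yⱼ`, the translation `Yᵢ ↦ Yᵢ + 1`
conjugates `E - Eu` into `E + Eu` (`Eu` the Euler derivation in `Y`), so `G = H(Y + 1)` satisfies
`(E + Eu) G = -d G`. On the lowest homogeneous component `G_ν` of `G` this reads
`ν G_ν = -d G_ν`, which is absurd. So a first integral is free of `Y`, and then
`w (∂_T + Q ∂_Q) P = 0` forces it to be constant by comparing coefficients.
-/

open MvPolynomial

/-- In `R = ℂ[T,Q,Y₀,Y₁,Y₂]` (variables `X 0 = T`, `X 1 = Q`, `X 2 = Y₀`, `X 3 = Y₁`,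
`X 4 = Y₂`), the polynomial `L = (1/4)(a(Y₀−Y₁)² + b(Y₀−Y₂)² + c(Y₁−Y₂)²)`. -/
noncomputable def Lpoly5 (a b c : ℂ) : MvPolynomial (Fin 5) ℂ :=
  C (1 / 4 : ℂ) * (C a * (X 2 - X 3) ^ 2 + C b * (X 2 - X 4) ^ 2 + C c * (X 3 - X 4) ^ 2)

namespace MvPolynomial

open Finsupp

variable {R σ : Type*} [CommSemiring R]

theorem eq_mkDerivation_X (D : Derivation R (MvPolynomial σ R) (MvPolynomial σ R)) :
    D = mkDerivation R (fun i => D (X i)) :=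
  derivation_ext fun i => (mkDerivation_X R (fun i => D (X i)) i).symm

theorem algHom_intertwines_derivation {τ : Type*} (f : MvPolynomial σ R →ₐ[R] MvPolynomial τ R)
    (D₁ : Derivation R (MvPolynomial σ R) (MvPolynomial σ R))
    (D₂ : Derivation R (MvPolynomial τ R) (MvPolynomial τ R))
    (h : ∀ i, f (D₁ (X i)) = D₂ (f (X i))) (p : MvPolynomial σ R) : f (D₁ p) = D₂ (f p) := by
  induction p using MvPolynomial.induction_on with
  | C a => simp [← algebraMap_eq]
  | add p q hp hq => simp only [map_add, hp, hq]
  | mul_X p i hp => simp only [Derivation.leibniz, smul_eq_mul, map_add, map_mul, hp, h]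

section Homogeneous

variable {M : Type*} {u : σ → M} {D : Derivation R (MvPolynomial σ R) (MvPolynomial σ R)} {j : M}

theorem weightedHomogeneousComponent_weight_ne_zero [AddCommMonoid M] {p : MvPolynomial σ R}
    {s : σ →₀ ℕ} (hs : s ∈ p.support) : weightedHomogeneousComponent u (weight u s) p ≠ 0 := by
  classical
  intro h
  have := congrArg (coeff s) h
  rw [coeff_weightedHomogeneousComponent, if_pos rfl, coeff_zero] at this
  exact mem_support_iff.mp hs this

theorem isWeightedHomogeneous_derivation_monomial [AddCommMonoid M]
    (hD : ∀ i, (D (X i)).IsWeightedHomogeneous u (u i + j)) (s : σ →₀ ℕ) (r : R) :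
    (D (monomial s r)).IsWeightedHomogeneous u (weight u s + j) := by
  rw [eq_mkDerivation_X D, mkDerivation_monomial]
  refine (weightedHomogeneousSubmodule R u _).smul_mem r
    (Submodule.sum_mem _ fun i hi => ?_)
  dsimp only
  rw [mem_weightedHomogeneousSubmodule, smul_eq_mul,
    ← weight_sub_single_add (w := u) (Finsupp.mem_support_iff.mp hi), add_assoc]
  exact (isWeightedHomogeneous_monomial _ _ _ rfl).mul (hD i)

theorem weightedHomogeneousComponent_derivation_eq_sum [AddCommMonoid M] [DecidableEq M]
    (hD : ∀ i, (D (X i)).IsWeightedHomogeneous u (u i + j)) (m : M) (p : MvPolynomial σ R) :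
    weightedHomogeneousComponent u m (D p) =
      ∑ s ∈ p.support with weight u s + j = m, D (monomial s (coeff s p)) := by
  conv_lhs => rw [p.as_sum, map_sum, map_sum]
  rw [Finset.sum_filter]
  refine Finset.sum_congr rfl fun s _ => ?_
  have hs := isWeightedHomogeneous_derivation_monomial hD s (coeff s p)
  split_ifs with h
  · exact h ▸ hs.weightedHomogeneousComponent_same
  · exact hs.weightedHomogeneousComponent_ne _ (Ne.symm h)

theorem weightedHomogeneousComponent_derivation [AddCancelCommMonoid M]
    (hD : ∀ i, (D (X i)).IsWeightedHomogeneous u (u i + j)) {n m : M} (hnm : n + j = m)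
    (p : MvPolynomial σ R) :
    weightedHomogeneousComponent u m (D p) = D (weightedHomogeneousComponent u n p) := by
  classical
  subst hnm
  simp only [weightedHomogeneousComponent_derivation_eq_sum hD, add_left_inj,
    weightedHomogeneousComponent_apply, map_sum]

theorem weightedHomogeneousComponent_derivation_eq_zero [AddCommMonoid M]
    (hD : ∀ i, (D (X i)).IsWeightedHomogeneous u (u i + j)) {m : M} {p : MvPolynomial σ R}
    (hp : ∀ n, n + j = m → weightedHomogeneousComponent u n p = 0) :
    weightedHomogeneousComponent u m (D p) = 0 := by
  classical
  rw [weightedHomogeneousComponent_derivation_eq_sum hD]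
  refine Finset.sum_eq_zero fun s hs => ?_
  obtain ⟨hsp, rfl⟩ := Finset.mem_filter.mp hs
  exact absurd (hp _ rfl) (weightedHomogeneousComponent_weight_ne_zero hsp)

end Homogeneous

section Degree

variable {u : σ → ℕ}

theorem weightedTotalDegree_le_iff {p : MvPolynomial σ R} {n : ℕ} :
    weightedTotalDegree u p ≤ n ↔ ∀ s ∈ p.support, weight u s ≤ n :=
  Finset.sup_le_iff

theorem IsWeightedHomogeneous.weightedTotalDegree_le {p : MvPolynomial σ R} {n : ℕ}
    (hp : p.IsWeightedHomogeneous u n) : weightedTotalDegree u p ≤ n :=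
  weightedTotalDegree_le_iff.mpr fun _ hs => (hp (mem_support_iff.mp hs)).le

theorem weightedTotalDegree_derivation_le {D : Derivation R (MvPolynomial σ R) (MvPolynomial σ R)}
    {k : ℕ} (hD : ∀ i, weightedTotalDegree u (D (X i)) ≤ u i + k) (p : MvPolynomial σ R) :
    weightedTotalDegree u (D p) ≤ weightedTotalDegree u p + k := by
  classical
  conv_lhs => rw [p.as_sum, map_sum]
  refine weightedTotalDegree_le_iff.mpr fun t ht => ?_
  obtain ⟨s, hs, ht⟩ := Finset.mem_biUnion.mp (support_sum ht)
  rw [eq_mkDerivation_X D, mkDerivation_monomial] at ht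
  obtain ⟨i, hi, ht⟩ := Finset.mem_biUnion.mp (support_sum (support_smul ht))
  obtain ⟨a, ha, b, hb, rfl⟩ := Finset.mem_add.mp (support_mul _ _ ht)
  rw [Finset.mem_singleton.mp (support_monomial_subset ha), map_add]
  have hsi := weight_sub_single_add (w := u) (Finsupp.mem_support_iff.mp hi)
  have := le_weightedTotalDegree u hs
  have := (le_weightedTotalDegree u hb).trans (hD i)
  omega

theorem exists_min_weightedHomogeneousComponent_ne_zero {p : MvPolynomial σ R}
    (hp : p ≠ 0) :
    ∃ ν, weightedHomogeneousComponent u ν p ≠ 0 ∧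
      ∀ m < ν, weightedHomogeneousComponent u m p = 0 := by
  classical
  have hex : ∃ m, weightedHomogeneousComponent u m p ≠ 0 :=
    let ⟨s, hs⟩ := exists_coeff_ne_zero hp
    ⟨_, weightedHomogeneousComponent_weight_ne_zero (mem_support_iff.mpr hs)⟩
  exact ⟨Nat.find hex, Nat.find_spec hex, fun m hm => not_not.mp (Nat.find_min hex hm)⟩

theorem weightedHomogeneousComponent_weightedTotalDegree_ne_zero {p : MvPolynomial σ R}
    (hp : p ≠ 0) : weightedHomogeneousComponent u (weightedTotalDegree u p) p ≠ 0 := by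
  obtain ⟨s, hs, hmax⟩ := Finset.exists_mem_eq_sup p.support (support_nonempty.mpr hp) (weight u)
  rw [weightedTotalDegree, hmax]
  exact weightedHomogeneousComponent_weight_ne_zero hs

theorem mkDerivation_weight_smul_X [Fintype σ] (p : MvPolynomial σ R) :
    mkDerivation R (fun i => u i • X i) p = ∑ i, u i • (X i * pderiv i p) := by
  classical
  have hsum (q : MvPolynomial σ R) : (∑ i, (u i • X i : MvPolynomial σ R) • pderiv i) q =
      ∑ i, u i • (X i * pderiv i q) := by
    rw [← Derivation.coeFnAddMonoidHom_apply, map_sum, Finset.sum_apply]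
    simp [mul_assoc]
  rw [← hsum]
  congr 1
  exact derivation_ext fun k => by rw [mkDerivation_X, hsum]; simp [pderiv_X, Pi.single_apply]

theorem IsWeightedHomogeneous.mkDerivation_weight_smul_X [Fintype σ] {p : MvPolynomial σ R}
    {n : ℕ} (hp : p.IsWeightedHomogeneous u n) :
    mkDerivation R (fun i => u i • X i) p = n • p := by
  rw [MvPolynomial.mkDerivation_weight_smul_X, hp.sum_weight_X_mul_pderiv]

end Degree

theorem eq_C_add_sum_C_mul_X_of_totalDegree_le_one [Fintype σ] {p : MvPolynomial σ R}
    (hp : p.totalDegree ≤ 1) :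
    p = C (coeff 0 p) + ∑ i, C (coeff (Finsupp.single i 1) p) * X i := by
  classical
  ext t
  simp only [coeff_add, coeff_C, coeff_sum, coeff_C_mul, coeff_X]
  by_cases h0 : t = 0
  · subst h0
    simp
  by_cases h1 : ∃ k, t = single k 1
  · obtain ⟨k, rfl⟩ := h1
    simp [Finsupp.single_left_inj, eq_comm (a := (0 : σ →₀ ℕ))]
  · have hc : coeff t p = 0 := by
      by_contra hc
      have hle := (le_totalDegree (mem_support_iff.mpr hc)).trans hp
      interval_cases hs : t.sum fun _ e => e
      · exact h0 ((Finsupp.degree_eq_zero_iff t).mp hs)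
      · exact h1 ((sum_eq_one_iff t).mp hs)
    rw [hc, if_neg (Ne.symm h0), zero_add, Finset.sum_eq_zero]
    exact fun i _ => by rw [if_neg fun h => h1 ⟨i, h.symm⟩, mul_zero]

theorem coeff_X_mul_pderiv (i : σ) (p : MvPolynomial σ R) (t : σ →₀ ℕ) :
    coeff t (X i * pderiv i p) = t i * coeff t p := by
  classical
  rw [coeff_X_mul']
  split_ifs with h
  · rw [coeff_pderiv, sub_add_single_one_cancel (Finsupp.mem_support_iff.mp h), mul_comm]
    congr 2
    have := Finsupp.mem_support_iff.mp h
    simp only [tsub_apply, single_eq_same]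
    rw [← Nat.cast_add_one, Nat.sub_add_cancel (Nat.one_le_iff_ne_zero.mpr this)]
  · simp [Finsupp.notMem_support_iff.mp h]

theorem coeff_eq_zero_of_pderiv_add_X_mul_pderiv_eq_zero {K : Type*} [Field K] [CharZero K]
    {i j : σ} (hij : i ≠ j) {p : MvPolynomial σ K} (hp : pderiv i p + X j * pderiv j p = 0)
    {t : σ →₀ ℕ} (ht : t i ≠ 0 ∨ t j ≠ 0) : coeff t p = 0 := by
  have rel (t : σ →₀ ℕ) : coeff (t + single i 1) p * (t i + 1) + t j * coeff t p = 0 := by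
    simpa [coeff_pderiv, coeff_X_mul_pderiv] using congrArg (coeff t) hp
  have hj (t : σ →₀ ℕ) (htj : t j ≠ 0) : coeff t p = 0 := by
    -- `rel` propagates vanishing from `t + (n + 1) • eᵢ` down to `t + n • eᵢ`
    suffices ∀ m n, degreeOf i p < n + m → coeff (t + single i n) p = 0 by
      simpa using this (degreeOf i p + 1) 0 (by omega)
    intro m
    induction m with
    | zero =>
      intro n hn
      by_contra hc
      have := monomial_le_degreeOf i (mem_support_iff.mpr hc)
      simp at this
      omega
    | succ m ih =>
      intro n hn
      have := rel (t + single i n)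
      rw [add_assoc, ← single_add, ih (n + 1) (by omega), zero_mul, zero_add, Finsupp.add_apply,
        single_eq_of_ne hij.symm, add_zero] at this
      exact (mul_eq_zero.mp this).resolve_left (by exact_mod_cast htj)
  by_cases htj : t j = 0
  · have hti : t i ≠ 0 := ht.resolve_right (not_not.mpr htj)
    have := rel (t - single i 1)
    rw [sub_add_single_one_cancel hti, tsub_apply, tsub_apply, single_eq_same,
      single_eq_of_ne hij.symm, htj, ← Nat.cast_add_one,
      Nat.sub_add_cancel (Nat.one_le_iff_ne_zero.mpr hti)] at this
    simpa [hti] using this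
  · exact hj t htj

end MvPolynomial

namespace HalphenSystem

local notation "𝓡" => MvPolynomial (Fin 5) ℂ

def uY : Fin 5 → ℕ := ![0, 0, 1, 1, 1]

noncomputable def tqPart (w : ℂ) : Derivation ℂ 𝓡 𝓡 :=
  mkDerivation ℂ ![C w, C w * X 1, 0, 0, 0]

noncomputable def yPart (a b c : ℂ) : Derivation ℂ 𝓡 𝓡 :=
  mkDerivation ℂ ![0, 0, X 2 ^ 2 - Lpoly5 a b c, X 3 ^ 2 - Lpoly5 a b c, X 4 ^ 2 - Lpoly5 a b c]

noncomputable def derivation (w a b c : ℂ) : Derivation ℂ 𝓡 𝓡 :=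
  tqPart w + yPart a b c

noncomputable def yEuler : Derivation ℂ 𝓡 𝓡 :=
  mkDerivation ℂ fun i => uY i • X i

noncomputable def translate : 𝓡 →ₐ[ℂ] 𝓡 :=
  aeval ![X 0, X 1, X 2 + 1, X 3 + 1, X 4 + 1]

variable {a b c : ℂ}

theorem weight_uY (t : Fin 5 →₀ ℕ) : Finsupp.weight uY t = t 2 + t 3 + t 4 := by
  simp [Finsupp.weight_apply, Finsupp.sum_fintype, Fin.sum_univ_five, uY]

theorem isWeightedHomogeneous_X_sq_sub_Lpoly5 {M : Type*} [AddCommMonoid M] {u : Fin 5 → M}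
    {e : M} (h2 : u 2 = e) (h3 : u 3 = e) (h4 : u 4 = e) {i : Fin 5} (hi : u i = e) :
    (X i ^ 2 - Lpoly5 a b c).IsWeightedHomogeneous u (e + e) := by
  have hX (k : Fin 5) (hk : u k = e) : (X k : 𝓡).IsWeightedHomogeneous u e :=
    hk ▸ isWeightedHomogeneous_X ℂ u k
  have hsq (k l : Fin 5) (hk : u k = e) (hl : u l = e) :
      ((X k - X l : 𝓡) ^ 2).IsWeightedHomogeneous u (e + e) := by
    rw [sq]
    exact ((hX k hk).sub (hX l hl)).mul ((hX k hk).sub (hX l hl))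
  refine (sq (X i : 𝓡) ▸ (hX i hi).mul (hX i hi)).sub ?_
  exact ((((hsq 2 3 h2 h3).C_mul a).add ((hsq 2 4 h2 h4).C_mul b)).add
    ((hsq 3 4 h3 h4).C_mul c)).C_mul _

theorem tqPart_X_isWeightedHomogeneous (w : ℂ) (i : Fin 5) :
    (tqPart w (X i)).IsWeightedHomogeneous uY (uY i + 0) := by
  fin_cases i <;> simp only [tqPart, mkDerivation_X] <;>
    first
    | exact isWeightedHomogeneous_zero ℂ uY _
    | exact isWeightedHomogeneous_C uY w
    | exact (isWeightedHomogeneous_X ℂ uY 1).C_mul w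

theorem yPart_X_isWeightedHomogeneous (i : Fin 5) :
    (yPart a b c (X i)).IsWeightedHomogeneous uY (uY i + 1) := by
  fin_cases i <;> simp only [yPart, mkDerivation_X] <;>
    first
    | exact isWeightedHomogeneous_zero ℂ uY _
    | exact isWeightedHomogeneous_X_sq_sub_Lpoly5 rfl rfl rfl rfl

theorem yEuler_X_isWeightedHomogeneous (i : Fin 5) :
    (yEuler (X i)).IsWeightedHomogeneous uY (uY i + 0) := by
  rw [yEuler, mkDerivation_X, add_zero, ← mem_weightedHomogeneousSubmodule]
  exact nsmul_mem (isWeightedHomogeneous_X ℂ uY i) _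

theorem tqPart_apply (w : ℂ) (p : 𝓡) : tqPart w p = C w * (pderiv 0 p + X 1 * pderiv 1 p) := by
  have : tqPart w = (C w : 𝓡) • (pderiv 0 + (X 1 : 𝓡) • pderiv 1) :=
    derivation_ext fun i => by
      fin_cases i <;> simp [tqPart, Derivation.coe_smul, Derivation.coe_add, pderiv_X]
  simp [this, Derivation.coe_smul, Derivation.coe_add, mul_add]

theorem translate_Lpoly5 : translate (Lpoly5 a b c) = Lpoly5 a b c := by
  simp [translate, Lpoly5]

theorem translate_injective : Function.Injective translate := by
  let translateBack : 𝓡 →ₐ[ℂ] 𝓡 := aeval ![X 0, X 1, X 2 - 1, X 3 - 1, X 4 - 1]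
  have h : translateBack.comp translate = AlgHom.id ℂ 𝓡 :=
    algHom_ext fun i => by fin_cases i <;> simp [translate, translateBack]
  exact Function.LeftInverse.injective (g := translateBack) (DFunLike.congr_fun h)

-- On `Yᵢ`: `(Yᵢ + 1)² - L - (Yᵢ + 1) = Yᵢ² - L + Yᵢ`, using `translate_Lpoly5`.
theorem translate_yPart_sub_yEuler (p : 𝓡) :
    translate ((yPart a b c - yEuler) p) = (yPart a b c + yEuler) (translate p) := by
  refine algHom_intertwines_derivation translate _ _ (fun i => ?_) p
  fin_cases i <;> simp [yPart, yEuler, uY, translate_Lpoly5] <;> simp [translate] <;> ring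

theorem yPart_apply_ne_zero {H : 𝓡} {d : ℕ} (hd : d ≠ 0) (hH : H.IsWeightedHomogeneous uY d)
    (hH0 : H ≠ 0) : yPart a b c H ≠ 0 := by
  intro hEH
  set G := translate H
  have hG : (yPart a b c + yEuler) G = -(d • G) := by
    rw [← translate_yPart_sub_yEuler, Derivation.sub_apply, hEH, yEuler,
      hH.mkDerivation_weight_smul_X, zero_sub, map_neg, map_nsmul]
  obtain ⟨ν, hν, hlow⟩ := exists_min_weightedHomogeneousComponent_ne_zero (u := uY)
    ((map_ne_zero_iff _ translate_injective).mpr hH0)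
  have hGν := congrArg (weightedHomogeneousComponent uY ν) hG
  rw [Derivation.add_apply, map_add,
    weightedHomogeneousComponent_derivation_eq_zero yPart_X_isWeightedHomogeneous
      fun n hn => hlow n (by omega),
    weightedHomogeneousComponent_derivation yEuler_X_isWeightedHomogeneous (add_zero ν),
    yEuler, (weightedHomogeneousComponent_isWeightedHomogeneous ν G).mkDerivation_weight_smul_X,
    map_neg, map_nsmul, zero_add, eq_neg_iff_add_eq_zero, ← add_nsmul] at hGν
  exact hν ((smul_eq_zero.mp hGν).resolve_left (by omega))

theorem weightedTotalDegree_uY_eq_zero_of_derivation_apply_eq_zero (w : ℂ) {P : 𝓡}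
    (hP : derivation w a b c P = 0) : weightedTotalDegree uY P = 0 := by
  by_contra hN
  have hP0 : P ≠ 0 := by
    rintro rfl
    exact hN (weightedTotalDegree_zero _)
  have htop := congrArg (weightedHomogeneousComponent uY (weightedTotalDegree uY P + 1)) hP
  rw [derivation, Derivation.add_apply, map_add,
    weightedHomogeneousComponent_derivation (tqPart_X_isWeightedHomogeneous w) (add_zero _),
    weightedHomogeneousComponent_eq_zero _ _ (lt_add_one _), map_zero, zero_add,
    weightedHomogeneousComponent_derivation yPart_X_isWeightedHomogeneous rfl, map_zero] at htop
  exact yPart_apply_ne_zero hN (weightedHomogeneousComponent_isWeightedHomogeneous _ _)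
    (weightedHomogeneousComponent_weightedTotalDegree_ne_zero hP0) htop

theorem eq_C_of_derivation_apply_eq_zero {w : ℂ} (hw : w ≠ 0) {P : 𝓡}
    (hP : derivation w a b c P = 0) : P = C (coeff 0 P) := by
  have hY : P.IsWeightedHomogeneous uY 0 :=
    isWeightedHomogeneous_zero_iff_weightedTotalDegree_eq_zero.mpr
      (weightedTotalDegree_uY_eq_zero_of_derivation_apply_eq_zero w hP)
  have htq : tqPart w P = 0 := by
    have h := congrArg (weightedHomogeneousComponent uY 0) hP
    rwa [derivation, Derivation.add_apply, map_add,
      weightedHomogeneousComponent_derivation (tqPart_X_isWeightedHomogeneous w) (add_zero 0),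
      weightedHomogeneousComponent_eq_self hY,
      weightedHomogeneousComponent_derivation_eq_zero yPart_X_isWeightedHomogeneous
        fun n hn => absurd hn (Nat.succ_ne_zero n), add_zero, map_zero] at h
  rw [tqPart_apply, mul_eq_zero, C_eq_zero] at htq
  rw [← totalDegree_eq_zero_iff_eq_C, totalDegree_eq_zero_iff]
  intro t ht k
  have hTQ : t 0 = 0 ∧ t 1 = 0 := by
    by_contra h
    exact mem_support_iff.mp ht (coeff_eq_zero_of_pderiv_add_X_mul_pderiv_eq_zero (by decide)
      (htq.resolve_left hw) (by tauto))
  have hYt := hY (mem_support_iff.mp ht)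
  rw [weight_uY] at hYt
  fin_cases k <;> simp <;> omega

theorem weightedTotalDegree_derivation_apply_le (w : ℂ) {u : Fin 5 → ℕ} {e k : ℕ}
    (h2 : u 2 = e) (h3 : u 3 = e) (h4 : u 4 = e) (hek : e ≤ k) (p : 𝓡) :
    weightedTotalDegree u (derivation w a b c p) ≤ weightedTotalDegree u p + k := by
  refine weightedTotalDegree_derivation_le (fun i => ?_) p
  fin_cases i <;> simp [derivation, tqPart, yPart]
  · exact (isWeightedHomogeneous_C u w).weightedTotalDegree_le.trans (Nat.zero_le _)
  · exact ((isWeightedHomogeneous_X ℂ u 1).C_mul w).weightedTotalDegree_le.trans le_self_add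
  all_goals
    refine (isWeightedHomogeneous_X_sq_sub_Lpoly5 h2 h3 h4 ?_).weightedTotalDegree_le.trans ?_
    all_goals omega

theorem exists_eq_affine_of_derivation_apply_eq_mul {w : ℂ} {P F : 𝓡} (hP : P ≠ 0)
    (hPF : derivation w a b c P = F * P) :
    ∃ l₀ l₁ l₂ l₃ : ℂ, F = C l₀ * X 2 + C l₁ * X 3 + C l₂ * X 4 + C l₃ := by
  classical
  rcases eq_or_ne F 0 with rfl | hF
  · exact ⟨0, 0, 0, 0, by simp⟩
  have hbound {u : Fin 5 → ℕ} {e k : ℕ} (h2 : u 2 = e) (h3 : u 3 = e) (h4 : u 4 = e)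
      (hek : e ≤ k) : weightedTotalDegree u (F * P) ≤ weightedTotalDegree u P + k :=
    hPF ▸ weightedTotalDegree_derivation_apply_le w h2 h3 h4 hek P
  have htot : F.totalDegree ≤ 1 := by
    have := hbound (u := 1) (e := 1) (k := 1) rfl rfl rfl le_rfl
    rw [weightedTotalDegree_one, weightedTotalDegree_one, totalDegree_mul_of_isDomain hF hP] at this
    omega
  have hfree (i : Fin 5) (h2 : (2 : Fin 5) ≠ i) (h3 : (3 : Fin 5) ≠ i) (h4 : (4 : Fin 5) ≠ i) :
      coeff (Finsupp.single i 1) F = 0 := by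
    have := hbound (u := Pi.single i 1) (e := 0) (k := 0) (Pi.single_eq_of_ne h2 1)
      (Pi.single_eq_of_ne h3 1) (Pi.single_eq_of_ne h4 1) le_rfl
    rw [weightedTotalDegree_piSingle, weightedTotalDegree_piSingle, degreeOf_mul_eq hF hP] at this
    by_contra hc
    have := monomial_le_degreeOf i (mem_support_iff.mpr hc)
    simp at this
    omega
  refine ⟨coeff (Finsupp.single 2 1) F, coeff (Finsupp.single 3 1) F,
    coeff (Finsupp.single 4 1) F, coeff 0 F, ?_⟩
  conv_lhs => rw [eq_C_add_sum_C_mul_X_of_totalDegree_le_one htot]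
  rw [Fin.sum_univ_five, hfree 0 (by decide) (by decide) (by decide),
    hfree 1 (by decide) (by decide) (by decide)]
  simp only [map_zero, zero_mul, zero_add]
  ring

end HalphenSystem

theorem stmt_7_general (γ : ℚ)
    (h3 : γ < 1)
    (a b c w : ℂ)
    (hw : w = 1 - (γ : ℂ))
    (D : Derivation ℂ (MvPolynomial (Fin 5) ℂ) (MvPolynomial (Fin 5) ℂ))
    (hDT : D (X 0) = C w)
    (hDQ : D (X 1) = C w * X 1)
    (hDY0 : D (X 2) = (X 2) ^ 2 - Lpoly5 a b c)
    (hDY1 : D (X 3) = (X 3) ^ 2 - Lpoly5 a b c)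
    (hDY2 : D (X 4) = (X 4) ^ 2 - Lpoly5 a b c)
    (P F : MvPolynomial (Fin 5) ℂ) (hP : Irreducible P) (hDP : D P = F * P) :
    F ≠ 0 ∧ ∃ l₀ l₁ l₂ l₃ : ℂ, F = C l₀ * X 2 + C l₁ * X 3 + C l₂ * X 4 + C l₃ := by
  have hw0 : w ≠ 0 := by
    rw [hw, sub_ne_zero]
    exact_mod_cast h3.ne'
  have hD : D = HalphenSystem.derivation w a b c :=
    derivation_ext fun i => by
      fin_cases i <;> simp [HalphenSystem.derivation, HalphenSystem.tqPart, HalphenSystem.yPart,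
        hDT, hDQ, hDY0, hDY1, hDY2]
  subst hD
  refine ⟨?_, HalphenSystem.exists_eq_affine_of_derivation_apply_eq_mul hP.ne_zero hDP⟩
  rintro rfl
  rw [zero_mul] at hDP
  have hPC := HalphenSystem.eq_C_of_derivation_apply_eq_zero hw0 hDP
  have hc : coeff 0 P ≠ 0 := fun h => hP.ne_zero (by rw [hPC, h, C_0])
  exact hP.not_isUnit (hPC ▸ hc.isUnit.map C)

/-- if `P ∈ R` is irreducible and `D P = F·P` for some `F ∈ R`, then `F ≠ 0` and
`F = λ₀Y₀ + λ₁Y₁ + λ₂Y₂ + λ₃` for some complex numbers `λᵢ`. -/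
theorem stmt_7 (α β γ : ℚ)
    (hα : ∃ n : ℕ, 0 < n ∧ α = 1 / n) (hβ : ∃ n : ℕ, 0 < n ∧ β = 1 / n)
    (hγ : ∃ n : ℕ, 0 < n ∧ γ = 1 / n)
    (h0 : 0 < α) (h1 : α < β) (h2 : β < γ) (h3 : γ < 1) (h4 : α + β < γ)
    (a b c w : ℂ)
    (ha : a = (γ : ℂ) * (1 - (α : ℂ) - (β : ℂ)) + 2 * (α : ℂ) * (β : ℂ))
    (hb : b = ((α : ℂ) + (β : ℂ)) * ((γ : ℂ) - (α : ℂ) - (β : ℂ)) +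
        2 * (α : ℂ) * (β : ℂ) - (γ : ℂ) + 1)
    (hc : c = (γ : ℂ) * ((α : ℂ) + (β : ℂ) - (γ : ℂ) + 1) - 2 * (α : ℂ) * (β : ℂ))
    (hw : w = 1 - (γ : ℂ))
    (D : Derivation ℂ (MvPolynomial (Fin 5) ℂ) (MvPolynomial (Fin 5) ℂ))
    (hDT : D (X 0) = C w)
    (hDQ : D (X 1) = C w * X 1)
    (hDY0 : D (X 2) = (X 2) ^ 2 - Lpoly5 a b c)
    (hDY1 : D (X 3) = (X 3) ^ 2 - Lpoly5 a b c)
    (hDY2 : D (X 4) = (X 4) ^ 2 - Lpoly5 a b c)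
    (P F : MvPolynomial (Fin 5) ℂ) (hP : Irreducible P) (hDP : D P = F * P) :
    F ≠ 0 ∧ ∃ l₀ l₁ l₂ l₃ : ℂ, F = C l₀ * X 2 + C l₁ * X 3 + C l₂ * X 4 + C l₃ :=
  stmt_7_general γ h3 a b c w hw D hDT hDQ hDY0 hDY1 hDY2 P F hP hDP
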